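/- Let μ ∈ ℍ be nonzero and let f₁, f₂, f₃, f₄ ∈ ℍ. If f₁·h^μ + f₂·h^{μi} + f₃·h^{μj} + f₄·h^{μk} = 0 for every h ∈ ℍ, then f₁ = f₂ = f₃ = f₄ = 0. -/

import Mathlib

/-! Conjugation by `i`, `j`, `k` fixes `1` and sends each of `i`, `j`, `k` to `±` itself, so
evaluating the identity at `h = 1, i, j, k` gives `(f₁ ± f₂ ± f₃ ± f₄) · μ e μ⁻¹ = 0`, with the
sign patterns forming the rows of a `4 × 4` Hadamard matrix. The factor `μ e μ⁻¹` is nonzero and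
the Hadamard matrix is invertible (its square is `4`), so all `fₙ` vanish. -/

open Quaternion Filter Topology Asymptotics

noncomputable section

/-- The imaginary unit `i` of the real quaternions. -/
def qI : ℍ[ℝ] := ⟨0, 1, 0, 0⟩
/-- The imaginary unit `j` of the real quaternions. -/
def qJ : ℍ[ℝ] := ⟨0, 0, 1, 0⟩
/-- The imaginary unit `k` of the real quaternions. -/
def qK : ℍ[ℝ] := ⟨0, 0, 0, 1⟩

/-- Quaternion rotation `p ↦ μ p μ⁻¹`. -/
def qRot (μ p : ℍ[ℝ]) : ℍ[ℝ] := μ * p * μ⁻¹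

/-- The left GHR derivative `∂f/∂q^μ` at `q`. -/
def lD (f : ℍ[ℝ] → ℍ[ℝ]) (μ q : ℍ[ℝ]) : ℍ[ℝ] :=
  (4 : ℍ[ℝ])⁻¹ * (fderiv ℝ f q 1 - fderiv ℝ f q qI * qRot μ qI
    - fderiv ℝ f q qJ * qRot μ qJ - fderiv ℝ f q qK * qRot μ qK)

/-- The left conjugate GHR derivative `∂f/∂q^{μ*}` at `q`. -/
def lDc (f : ℍ[ℝ] → ℍ[ℝ]) (μ q : ℍ[ℝ]) : ℍ[ℝ] :=
  (4 : ℍ[ℝ])⁻¹ * (fderiv ℝ f q 1 + fderiv ℝ f q qI * qRot μ qI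
    + fderiv ℝ f q qJ * qRot μ qJ + fderiv ℝ f q qK * qRot μ qK)

/-- The right GHR derivative `∂ᵣf/∂q^μ` at `q`. -/
def rD (f : ℍ[ℝ] → ℍ[ℝ]) (μ q : ℍ[ℝ]) : ℍ[ℝ] :=
  (4 : ℍ[ℝ])⁻¹ * (fderiv ℝ f q 1 - qRot μ qI * fderiv ℝ f q qI
    - qRot μ qJ * fderiv ℝ f q qJ - qRot μ qK * fderiv ℝ f q qK)

/-- The right conjugate GHR derivative `∂ᵣf/∂q^{μ*}` at `q`. -/
def rDc (f : ℍ[ℝ] → ℍ[ℝ]) (μ q : ℍ[ℝ]) : ℍ[ℝ] :=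
  (4 : ℍ[ℝ])⁻¹ * (fderiv ℝ f q 1 + qRot μ qI * fderiv ℝ f q qI
    + qRot μ qJ * fderiv ℝ f q qJ + qRot μ qK * fderiv ℝ f q qK)

theorem eq_zero_of_sign_sums_eq_zero {M : Type*} [AddCommGroup M] [IsAddTorsionFree M]
    {a b c d : M} (h₁ : a + b + c + d = 0) (h₂ : a + b - c - d = 0) (h₃ : a - b + c - d = 0)
    (h₄ : a - b - c + d = 0) : a = 0 ∧ b = 0 ∧ c = 0 ∧ d = 0 := by
  refine ⟨?_, ?_, ?_, ?_⟩ <;> refine (nsmul_eq_zero_iff_right four_ne_zero).1 ?_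
  · linear_combination (norm := abel) h₁ + h₂ + h₃ + h₄
  · linear_combination (norm := abel) h₁ + h₂ - h₃ - h₄
  · linear_combination (norm := abel) h₁ - h₂ + h₃ - h₄
  · linear_combination (norm := abel) h₁ - h₂ - h₃ + h₄

instance : IsAddTorsionFree ℍ[ℝ] := .of_isTorsionFree ℝ _

lemma qI_ne_zero : qI ≠ 0 := fun h => by simpa [qI] using congrArg QuaternionAlgebra.imI h
lemma qJ_ne_zero : qJ ≠ 0 := fun h => by simpa [qJ] using congrArg QuaternionAlgebra.imJ h
lemma qK_ne_zero : qK ≠ 0 := fun h => by simpa [qK] using congrArg QuaternionAlgebra.imK h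

lemma qI_mul_qJ : qI * qJ = -(qJ * qI) := by ext <;> simp <;> simp [qI, qJ]
lemma qJ_mul_qK : qJ * qK = -(qK * qJ) := by ext <;> simp <;> simp [qJ, qK]
lemma qK_mul_qI : qK * qI = -(qI * qK) := by ext <;> simp <;> simp [qI, qK]

lemma qRot_mul (μ ν p : ℍ[ℝ]) : qRot (μ * ν) p = qRot μ (qRot ν p) := by
  simp only [qRot, mul_inv_rev, mul_assoc]

lemma qRot_neg (μ p : ℍ[ℝ]) : qRot μ (-p) = -qRot μ p := by
  simp only [qRot, mul_neg, neg_mul]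

lemma qRot_one {μ : ℍ[ℝ]} (hμ : μ ≠ 0) : qRot μ 1 = 1 := by
  simp [qRot, hμ]

lemma qRot_self {μ : ℍ[ℝ]} (hμ : μ ≠ 0) : qRot μ μ = μ := by
  simp [qRot, hμ]

lemma qRot_of_mul_eq_neg {μ p : ℍ[ℝ]} (hμ : μ ≠ 0) (h : μ * p = -(p * μ)) : qRot μ p = -p := by
  simp [qRot, h, hμ]

lemma qRot_ne_zero {μ p : ℍ[ℝ]} (hμ : μ ≠ 0) (hp : p ≠ 0) : qRot μ p ≠ 0 := by
  simp [qRot, hμ, hp]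

lemma qRot_qI_qJ : qRot qI qJ = -qJ := qRot_of_mul_eq_neg qI_ne_zero qI_mul_qJ
lemma qRot_qJ_qI : qRot qJ qI = -qI :=
  qRot_of_mul_eq_neg qJ_ne_zero (neg_eq_iff_eq_neg.1 qI_mul_qJ.symm)
lemma qRot_qJ_qK : qRot qJ qK = -qK := qRot_of_mul_eq_neg qJ_ne_zero qJ_mul_qK
lemma qRot_qK_qJ : qRot qK qJ = -qJ :=
  qRot_of_mul_eq_neg qK_ne_zero (neg_eq_iff_eq_neg.1 qJ_mul_qK.symm)
lemma qRot_qK_qI : qRot qK qI = -qI := qRot_of_mul_eq_neg qK_ne_zero qK_mul_qI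
lemma qRot_qI_qK : qRot qI qK = -qK :=
  qRot_of_mul_eq_neg qI_ne_zero (neg_eq_iff_eq_neg.1 qK_mul_qI.symm)

theorem left_rotated_differentials_independent
    (μ : ℍ[ℝ]) (hμ : μ ≠ 0) (f₁ f₂ f₃ f₄ : ℍ[ℝ])
    (h : ∀ p : ℍ[ℝ], f₁ * qRot μ p + f₂ * qRot (μ * qI) p
      + f₃ * qRot (μ * qJ) p + f₄ * qRot (μ * qK) p = 0) :
    f₁ = 0 ∧ f₂ = 0 ∧ f₃ = 0 ∧ f₄ = 0 := by
  have cancel : ∀ {x e : ℍ[ℝ]}, e ≠ 0 → x * qRot μ e = 0 → x = 0 := fun he hx =>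
    (mul_eq_zero.1 hx).resolve_right (qRot_ne_zero hμ he)
  simp only [qRot_mul] at h
  refine eq_zero_of_sign_sums_eq_zero (cancel one_ne_zero ?_) (cancel qI_ne_zero ?_)
    (cancel qJ_ne_zero ?_) (cancel qK_ne_zero ?_)
  · simpa only [qRot_one qI_ne_zero, qRot_one qJ_ne_zero, qRot_one qK_ne_zero, add_mul] using h 1
  · simpa only [qRot_self qI_ne_zero, qRot_qJ_qI, qRot_qK_qI, qRot_neg, mul_neg, add_mul, sub_mul,
      ← sub_eq_add_neg] using h qI
  · simpa only [qRot_qI_qJ, qRot_self qJ_ne_zero, qRot_qK_qJ, qRot_neg, mul_neg, add_mul, sub_mul,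
      ← sub_eq_add_neg] using h qJ
  · simpa only [qRot_qI_qK, qRot_qJ_qK, qRot_self qK_ne_zero, qRot_neg, mul_neg, add_mul, sub_mul,
      ← sub_eq_add_neg] using h qK

end
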